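/- The curves q₁(t) = cos(E(t)) - e, q₂(t) = √(1-e²) sin(E(t)), where E(t) is defined implicitly by t = E - e sin E with 0 ≤ e < 1, satisfy Kepler's equations q₁'' = -q₁/(q₁²+q₂²)^(3/2) and q₂'' = -q₂/(q₁²+q₂²)^(3/2). -/

import Mathlib

/-- The curves q₁(t) = cos(E(t)) - e, q₂(t) = √(1-e²) sin(E(t)), where
E(t) solves Kepler's equation t = E - e sin E (0 ≤ e < 1), satisfy Kepler's equations
of motion q₁'' = -q₁/(q₁²+q₂²)^(3/2), q₂'' = -q₂/(q₁²+q₂²)^(3/2). -/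
theorem kepler_exact_solution
    (e : ℝ) (he0 : 0 ≤ e) (he1 : e < 1)
    (E : ℝ → ℝ)
    (hE : ∀ t : ℝ, E t - e * Real.sin (E t) = t)
    (hEdiff : Differentiable ℝ E)
    (q₁ q₂ : ℝ → ℝ)
    (hq₁ : q₁ = fun t => Real.cos (E t) - e)
    (hq₂ : q₂ = fun t => Real.sqrt (1 - e ^ 2) * Real.sin (E t)) :
    ∀ t : ℝ,
      deriv (deriv q₁) t = -(q₁ t) / ((q₁ t) ^ 2 + (q₂ t) ^ 2) ^ ((3 : ℝ) / 2) ∧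
      deriv (deriv q₂) t = -(q₂ t) / ((q₁ t) ^ 2 + (q₂ t) ^ 2) ^ ((3 : ℝ) / 2) := by
  subst hq₁ hq₂
  set c := Real.sqrt (1 - e ^ 2) with hc
  have hc2 : c ^ 2 = 1 - e ^ 2 := Real.sq_sqrt (by nlinarith)
  have hrpos : ∀ t, 0 < 1 - e * Real.cos (E t) := by
    intro t
    nlinarith [Real.cos_le_one (E t), Real.neg_one_le_cos (E t)]
  have hrne : ∀ t, 1 - e * Real.cos (E t) ≠ 0 := fun t => (hrpos t).ne'
  have hE' : ∀ t, HasDerivAt E (1 / (1 - e * Real.cos (E t))) t := by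
    intro t
    have hD := (hEdiff t).hasDerivAt
    have hs : HasDerivAt (fun t => Real.sin (E t)) (Real.cos (E t) * deriv E t) t :=
      (Real.hasDerivAt_sin (E t)).comp t hD
    have h1 : HasDerivAt (fun t => E t - e * Real.sin (E t))
        (deriv E t * (1 - e * Real.cos (E t))) t := by
      have := hD.sub (hs.const_mul e)
      refine this.congr_deriv ?_
      ring
    have h2 : HasDerivAt (fun t => E t - e * Real.sin (E t)) 1 t := by
      have hfe : (fun t => E t - e * Real.sin (E t)) = id := funext hE
      rw [hfe]
      exact hasDerivAt_id t
    have heq := h1.unique h2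
    have hd : deriv E t = 1 / (1 - e * Real.cos (E t)) := by
      rw [eq_div_iff (hrne t)]
      exact heq
    rw [← hd]
    exact hD
  -- first derivatives
  have hd1 : ∀ t, HasDerivAt (fun t => Real.cos (E t) - e)
      (-Real.sin (E t) * (1 / (1 - e * Real.cos (E t)))) t := by
    intro t
    exact (((Real.hasDerivAt_cos (E t)).comp t (hE' t))).sub_const e
  have hd2 : ∀ t, HasDerivAt (fun t => c * Real.sin (E t))
      (c * (Real.cos (E t) * (1 / (1 - e * Real.cos (E t))))) t := by
    intro t
    exact (((Real.hasDerivAt_sin (E t)).comp t (hE' t))).const_mul c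
  have hdq1 : deriv (fun t => Real.cos (E t) - e)
      = fun t => -Real.sin (E t) / (1 - e * Real.cos (E t)) := by
    funext s
    rw [(hd1 s).deriv]
    ring
  have hdq2 : deriv (fun t => c * Real.sin (E t))
      = fun t => c * Real.cos (E t) / (1 - e * Real.cos (E t)) := by
    funext s
    rw [(hd2 s).deriv]
    ring
  -- derivative of r
  have hr' : ∀ t, HasDerivAt (fun t => 1 - e * Real.cos (E t))
      (e * Real.sin (E t) / (1 - e * Real.cos (E t))) t := by
    intro t
    have := (((Real.hasDerivAt_cos (E t)).comp t (hE' t))).const_mul e |>.const_sub 1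
    refine this.congr_deriv ?_
    ring
  intro t
  have hrt := hrpos t
  -- the radius cubed identity
  have hpow : ((Real.cos (E t) - e) ^ 2 + (c * Real.sin (E t)) ^ 2) ^ ((3 : ℝ) / 2)
      = (1 - e * Real.cos (E t)) ^ 3 := by
    have hsum : (Real.cos (E t) - e) ^ 2 + (c * Real.sin (E t)) ^ 2
        = (1 - e * Real.cos (E t)) ^ 2 := by
      have hs := Real.sin_sq_add_cos_sq (E t)
      nlinarith [hc2]
    rw [hsum, ← Real.rpow_natCast (1 - e * Real.cos (E t)) 2, ← Real.rpow_mul hrt.le]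
    norm_num
  constructor
  · -- q₁''
    rw [hdq1]
    have hnum : HasDerivAt (fun s => -Real.sin (E s))
        (-Real.cos (E t) * (1 / (1 - e * Real.cos (E t)))) t := by
      have := ((Real.hasDerivAt_sin (E t)).comp t (hE' t)).neg
      refine this.congr_deriv ?_
      ring
    have hdiv : HasDerivAt (fun s => -Real.sin (E s) / (1 - e * Real.cos (E s))) _ t :=
      hnum.div (hr' t) (hrne t)
    rw [hdiv.deriv, hpow]
    have hs := Real.sin_sq_add_cos_sq (E t)
    field_simp
    linear_combination (e / (1 - Real.cos (E t) * e) ^ 3) * hs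
  · -- q₂''
    rw [hdq2]
    have hnum : HasDerivAt (fun s => c * Real.cos (E s))
        (c * (-Real.sin (E t) * (1 / (1 - e * Real.cos (E t))))) t :=
      ((Real.hasDerivAt_cos (E t)).comp t (hE' t)).const_mul c
    have hdiv : HasDerivAt (fun s => c * Real.cos (E s) / (1 - e * Real.cos (E s))) _ t :=
      hnum.div (hr' t) (hrne t)
    rw [hdiv.deriv, hpow]
    have hs := Real.sin_sq_add_cos_sq (E t)
    field_simp
    ring
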